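/- arXiv:1711.10049 — 2 statements merged into one kernel-verified Lean document; each statement's English description precedes it below -/
import Mathlib

section
/- Let A be a bounded self-adjoint operator on a Hilbert space H and let {j_α}_{α∈ℕ} be bounded self-adjoint operators with ∑_α j_α² = Id (converging weakly). Then for every φ ∈ H, ∑_α ‖A j_α φ‖² ≤ 2‖Aφ‖² + ⟨φ, Cφ⟩ where C = -2 ∑_α [A, j_α]² and [A,j] = Aj - jA. -/
open scoped InnerProductSpace

/-!
Writing `B α = A j α - j α A`, we have `A j α φ = j α (A φ) + B α φ`, hence
`‖A j α φ‖² ≤ 2‖j α (A φ)‖² + 2‖B α φ‖²`. Summing over `α`, the first terms give `2‖A φ‖²` by the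
partition of unity, and since `B α` is skew-adjoint, `‖B α φ‖² = -⟪φ, B α² φ⟫`, so the second
terms give `⟪φ, C φ⟫`.
-/

theorem IsSelfAdjoint.star_mul_sub_mul {R : Type*} [Ring R] [StarRing R] {a b : R}
    (ha : IsSelfAdjoint a) (hb : IsSelfAdjoint b) :
    star (a * b - b * a) = -(a * b - b * a) := by
  simp only [star_sub, star_mul, ha.star_eq, hb.star_eq, neg_sub]

theorem norm_add_sq_le_two_mul {E : Type*} [SeminormedAddCommGroup E] (x y : E) :
    ‖x + y‖ ^ 2 ≤ 2 * ‖x‖ ^ 2 + 2 * ‖y‖ ^ 2 :=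
  calc ‖x + y‖ ^ 2 ≤ (‖x‖ + ‖y‖) ^ 2 := by gcongr; exact norm_add_le x y
    _ ≤ 2 * ‖x‖ ^ 2 + 2 * ‖y‖ ^ 2 := by linarith [add_sq_le (a := ‖x‖) (b := ‖y‖)]

section

variable {𝕜 E ι : Type*} [RCLike 𝕜] [NormedAddCommGroup E] [InnerProductSpace 𝕜 E]
  [CompleteSpace E]

theorem ContinuousLinearMap.re_inner_star_mul_self_apply (T : E →L[𝕜] E) (x : E) :
    RCLike.re ⟪x, (star T * T) x⟫_𝕜 = ‖T x‖ ^ 2 := by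
  rw [star_eq_adjoint, apply_norm_sq_eq_inner_adjoint_right]
  rfl

theorem hasSum_norm_sq_of_hasSum_inner_star_mul_self {T : ι → E →L[𝕜] E} {x : E} {s : 𝕜}
    (h : HasSum (fun i => ⟪x, (star (T i) * T i) x⟫_𝕜) s) :
    HasSum (fun i => ‖T i x‖ ^ 2) (RCLike.re s) := by
  simpa only [RCLike.reCLM_apply, ContinuousLinearMap.re_inner_star_mul_self_apply] using
    h.mapL RCLike.reCLM

end

theorem partition_of_unity_estimate
    {E : Type*} [NormedAddCommGroup E] [InnerProductSpace ℂ E] [CompleteSpace E]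
    (A : E →L[ℂ] E) (hA : IsSelfAdjoint A)
    (j : ℕ → E →L[ℂ] E) (hj : ∀ α, IsSelfAdjoint (j α))
    (hsum : ∀ φ ψ : E, HasSum (fun α => ⟪ψ, (j α * j α) φ⟫_ℂ) ⟪ψ, φ⟫_ℂ)
    (C : E →L[ℂ] E)
    (hC : ∀ φ ψ : E,
      HasSum (fun α => (-2 : ℂ) *
        ⟪ψ, ((A * j α - j α * A) * (A * j α - j α * A)) φ⟫_ℂ) ⟪ψ, C φ⟫_ℂ)
    (φ : E) :
    ∑' α, ‖A (j α φ)‖ ^ 2 ≤ 2 * ‖A φ‖ ^ 2 + (⟪φ, C φ⟫_ℂ).re := by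
  set B : ℕ → E →L[ℂ] E := fun α => A * j α - j α * A
  have hjA : HasSum (fun α => ‖j α (A φ)‖ ^ 2) (‖A φ‖ ^ 2) := by
    have h := hasSum_norm_sq_of_hasSum_inner_star_mul_self (T := j) (x := A φ)
      (by simpa only [(hj _).star_eq] using hsum (A φ) (A φ))
    rwa [inner_self_eq_norm_sq] at h
  have hB : HasSum (fun α => 2 * ‖B α φ‖ ^ 2) (⟪φ, C φ⟫_ℂ).re := by
    have h := hasSum_norm_sq_of_hasSum_inner_star_mul_self (T := B) (x := φ)
      (s := ⟪φ, C φ⟫_ℂ / 2) <| by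
        convert (hC φ φ).div_const 2 using 2 with α
        rw [hA.star_mul_sub_mul (hj α), neg_mul, neg_apply, inner_neg_right]
        ring
    have h2 := h.mul_left 2
    rwa [RCLike.re_to_complex, Complex.div_ofNat_re, mul_div_cancel₀ _ two_ne_zero] at h2
  have hbound : ∀ α, ‖A (j α φ)‖ ^ 2 ≤ 2 * ‖j α (A φ)‖ ^ 2 + 2 * ‖B α φ‖ ^ 2 := fun α => by
    simpa [B] using norm_add_sq_le_two_mul (j α (A φ)) (B α φ)
  have hmajorant := (hjA.mul_left 2).add hB
  calc ∑' α, ‖A (j α φ)‖ ^ 2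
      ≤ ∑' α, (2 * ‖j α (A φ)‖ ^ 2 + 2 * ‖B α φ‖ ^ 2) :=
        (hmajorant.summable.of_nonneg_of_le (fun _ => sq_nonneg _) hbound).tsum_le_tsum hbound
          hmajorant.summable
    _ = 2 * ‖A φ‖ ^ 2 + (⟪φ, C φ⟫_ℂ).re := hmajorant.tsum_eq
end

section
/- Let A be a bounded self-adjoint operator that is unitarily equivalent to a countable direct sum ⊕_{n} (⊕_{j=1}^{k_n} S_n) in which some operator S appears as a summand infinitely many times (i.e., for infinitely many n, S_n = S). Then σ(S) ⊆ σ_ess(A). -/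
open scoped InnerProductSpace ENNReal

section Aux

variable {F : Type*} [NormedAddCommGroup F] [InnerProductSpace ℂ F] [CompleteSpace F]

/-- A self-adjoint bounded-below operator on a Hilbert space is invertible. -/
lemma aux_boundedBelow_isUnit (B : F →L[ℂ] F) (hB : IsSelfAdjoint B) {c : ℝ} (hc : 0 < c)
    (h : ∀ u, c * ‖u‖ ≤ ‖B u‖) : IsUnit B := by
  have hsymm := (ContinuousLinearMap.isSelfAdjoint_iff_isSymmetric).mp hB
  have hker : ∀ u, B u = 0 → u = 0 := by
    intro u hu
    have := h u
    rw [hu, norm_zero] at this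
    have h0 : ‖u‖ ≤ 0 := by nlinarith [norm_nonneg u]
    simpa [le_antisymm h0 (norm_nonneg u)] using (norm_eq_zero.mp (le_antisymm h0 (norm_nonneg u)))
  have hinj : Function.Injective B := by
    intro x y hxy
    have : B (x - y) = 0 := by rw [map_sub, hxy, sub_self]
    have := hker _ this
    exact sub_eq_zero.mp this
  -- closed range
  have hanti : AntilipschitzWith ⟨c, hc.le⟩⁻¹ B := by
    apply B.antilipschitz_of_bound
    intro x
    have hcoe : (((⟨c, hc.le⟩ : NNReal)⁻¹ : NNReal) : ℝ) = c⁻¹ := by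
      exact NNReal.coe_inv _
    rw [hcoe, ← div_eq_inv_mul, le_div_iff₀ hc]
    nlinarith [h x]
  have hclosed : IsClosed (Set.range ⇑B) := hanti.isClosed_range B.uniformContinuous
  have hclosed' : IsClosed ((LinearMap.range (B : F →ₗ[ℂ] F) : Submodule ℂ F) : Set F) := by
    rwa [LinearMap.coe_range]
  haveI : CompleteSpace (LinearMap.range (B : F →ₗ[ℂ] F)) := hclosed'.completeSpace_coe
  have horth : (LinearMap.range (B : F →ₗ[ℂ] F))ᗮ = ⊥ := by
    rw [Submodule.eq_bot_iff]
    intro y hy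
    have h1 : ⟪B (B y), y⟫_ℂ = 0 := hy (B (B y)) ⟨B y, rfl⟩
    have h1' : ⟪B y, B y⟫_ℂ = 0 := by
      have h2 := hsymm (B y) y
      simp only [ContinuousLinearMap.coe_coe] at h2
      rw [← h2]; exact h1
    have h2 : B y = 0 := inner_self_eq_zero.mp h1'
    exact hker y h2
  have hsurj : Function.Surjective B := by
    have := Submodule.orthogonal_eq_bot_iff.mp horth
    exact LinearMap.range_eq_top.mp this
  exact ContinuousLinearMap.isUnit_iff_bijective.mpr ⟨hinj, hsurj⟩

/-- Weyl criterion, easy direction: spectral points of self-adjoint operators admit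
approximate eigenvectors. -/
lemma aux_exists_approx (S : F →L[ℂ] F) (hSa : IsSelfAdjoint S) {z : ℂ}
    (hz : z ∈ spectrum ℂ S) {δ : ℝ} (hδ : 0 < δ) :
    ∃ u : F, ‖u‖ = 1 ∧ ‖S u - z • u‖ ≤ δ := by
  by_contra hcon
  push_neg at hcon
  have hzre : z = (z.re : ℂ) := hSa.mem_spectrum_eq_re hz
  set B := S - z • 1 with hBdef
  have hBsa : IsSelfAdjoint B := by
    rw [hBdef, hzre]
    have h1 : IsSelfAdjoint ((z.re : ℂ) • (1 : F →L[ℂ] F)) := by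
      rw [IsSelfAdjoint]
      rw [star_smul, star_one]
      congr 1
      simp [Complex.ext_iff]
    exact hSa.sub h1
  have hbdd : ∀ u, δ * ‖u‖ ≤ ‖B u‖ := by
    intro u
    rcases eq_or_ne u 0 with rfl | hu
    · simp
    · have hnu : (0 : ℝ) < ‖u‖ := norm_pos_iff.mpr hu
      set v := (‖u‖ : ℂ)⁻¹ • u with hv
      have hnv : ‖v‖ = 1 := by
        rw [hv, norm_smul]
        simp [norm_inv, hnu.ne']
      have h1 : δ < ‖S v - z • v‖ := hcon v hnv
      have h2 : S v - z • v = (‖u‖ : ℂ)⁻¹ • (S u - z • u) := by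
        rw [hv, map_smul, smul_comm z, smul_sub]
      rw [h2, norm_smul] at h1
      have h3 : ‖((‖u‖ : ℂ))⁻¹‖ = ‖u‖⁻¹ := by
        simp [norm_inv]
      rw [h3] at h1
      have hBu : B u = S u - z • u := by
        simp [hBdef, ContinuousLinearMap.sub_apply]
      rw [hBu]
      rw [inv_mul_eq_div, lt_div_iff₀ hnu] at h1
      linarith
  have hunit : IsUnit B := aux_boundedBelow_isUnit B hBsa hδ hbdd
  have : IsUnit (algebraMap ℂ (F →L[ℂ] F) z - S) := by
    have : algebraMap ℂ (F →L[ℂ] F) z - S = -B := by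
      rw [hBdef, Algebra.algebraMap_eq_smul_one]
      abel
    rw [this]
    exact hunit.neg
  exact (spectrum.mem_iff.mp hz) this

/-- If `t₀` is isolated (with gap `ε`) in the real spectrum of the self-adjoint operator `A`,
then there is an operator `P` whose range consists of eigenvectors of `A` for `t₀` and such
that `A - t₀` is bounded below by `ε` on `(1 - P)`-vectors. -/
lemma aux_gap_projection (A : F →L[ℂ] F) (hA : IsSelfAdjoint A) (t₀ ε : ℝ) (hε : 0 < ε)
    (hgap : ∀ t ∈ spectrum ℝ A, t ≠ t₀ → ε ≤ |t - t₀|) :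
    ∃ P : F →L[ℂ] F, (∀ v, A (P v) = (t₀ : ℂ) • P v) ∧
      (∀ v, ε * ‖v - P v‖ ≤ ‖A v - (t₀ : ℂ) • v‖) := by
  classical
  set f : ℝ → ℝ := fun t => max 0 (1 - |t - t₀| / ε) with hfdef
  have hfc : Continuous f := by
    apply continuous_const.max
    exact continuous_const.sub (((continuous_id.sub continuous_const).abs).div_const ε)
  have hf₁ : f t₀ = 1 := by simp [hfdef]
  have hf₀ : ∀ t, ε ≤ |t - t₀| → f t = 0 := by
    intro t ht
    have : 1 - |t - t₀| / ε ≤ 0 := by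
      have : (1 : ℝ) ≤ |t - t₀| / ε := (one_le_div hε).mpr ht
      linarith
    simp [hfdef, max_eq_left this]
  have hfs : ∀ t ∈ spectrum ℝ A, t = t₀ ∨ f t = 0 := by
    intro t ht
    rcases eq_or_ne t t₀ with h | h
    · exact Or.inl h
    · exact Or.inr (hf₀ t (hgap t ht h))
  set P : F →L[ℂ] F := cfc f A with hPdef
  set φ : ℝ → ℝ := fun t => t - t₀ with hφdef
  have hφc : Continuous φ := continuous_id.sub continuous_const
  have hφA : cfc φ A = A - algebraMap ℝ (F →L[ℂ] F) t₀ := by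
    have h1 : cfc φ A = cfc (fun t : ℝ => t) A - cfc (fun _ : ℝ => t₀) A :=
      cfc_sub (fun t : ℝ => t) (fun _ : ℝ => t₀) A (continuous_id.continuousOn)
        (continuous_const.continuousOn)
    rw [h1, cfc_id' (R := ℝ) (a := A) hA, cfc_const t₀ A hA]
  -- the algebraMap applied to a vector
  have halg : ∀ w : F, (algebraMap ℝ (F →L[ℂ] F) t₀) w = (t₀ : ℂ) • w := by
    intro w
    rw [Algebra.algebraMap_eq_smul_one]
    rw [ContinuousLinearMap.smul_apply, ContinuousLinearMap.one_apply]
    exact RCLike.real_smul_eq_coe_smul (K := ℂ) t₀ w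
  -- key identity : (A - t₀) P = 0
  have key1 : (cfc φ A) * P = 0 := by
    rw [hPdef, ← cfc_mul φ f A hφc.continuousOn hfc.continuousOn]
    have h0 : ∀ t ∈ spectrum ℝ A, φ t * f t = (fun _ : ℝ => (0:ℝ)) t := by
      intro t ht
      rcases hfs t ht with rfl | h
      · simp [hφdef]
      · simp [h]
    rw [cfc_congr h0, cfc_const_zero]
  have fact2 : ∀ v, A (P v) = (t₀ : ℂ) • P v := by
    intro v
    have h1 : ((cfc φ A) * P) v = 0 := by rw [key1]; rfl
    rw [ContinuousLinearMap.mul_apply, hφA, ContinuousLinearMap.sub_apply, halg] at h1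
    have := sub_eq_zero.mp h1
    exact this
  refine ⟨P, fact2, ?_⟩
  -- the quantitative bound
  set ψ : ℝ → ℝ := fun t => 1 - f t with hψdef
  have hψc : Continuous ψ := continuous_const.sub hfc
  set g : ℝ → ℝ := fun t => φ t * ψ t with hgdef
  have hgc : Continuous g := hφc.mul hψc
  set Q : F →L[ℂ] F := cfc g A with hQdef
  have hψA : cfc ψ A = 1 - P := by
    have h1 : cfc ψ A = cfc (fun _ : ℝ => (1:ℝ)) A - cfc f A :=
      cfc_sub (fun _ : ℝ => (1:ℝ)) f A continuous_const.continuousOn hfc.continuousOn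
    rw [h1, cfc_const_one ℝ A hA, hPdef]
  have hQ : Q = (cfc φ A) * (1 - P) := by
    rw [hQdef, hgdef, cfc_mul φ ψ A hφc.continuousOn hψc.continuousOn, hψA]
  have hQsa : IsSelfAdjoint Q := cfc_predicate g A
  have hQsymm := (ContinuousLinearMap.isSelfAdjoint_iff_isSymmetric).mp hQsa
  set R' : F →L[ℂ] F := ε • (1 - P) with hR'def
  have hR'cfc : R' = cfc (fun t => ε • ψ t) A := by
    rw [cfc_smul (R := ℝ) ε ψ A hψc.continuousOn, hψA]
  have hR'sa : IsSelfAdjoint R' := by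
    rw [hR'cfc]; exact cfc_predicate _ A
  have hR'symm := (ContinuousLinearMap.isSelfAdjoint_iff_isSymmetric).mp hR'sa
  set h : ℝ → ℝ := fun t => g t * g t - (ε • ψ t) * (ε • ψ t) with hhdef
  have hpos : 0 ≤ cfc h A := by
    apply cfc_nonneg
    intro t ht
    rcases hfs t ht with rfl | h0
    · simp [hhdef, hgdef, hψdef, hf₁]
    · have hge : ε ≤ |t - t₀| := by
        by_contra hlt
        push_neg at hlt
        rcases eq_or_ne t t₀ with rfl | hne
        · rw [hf₁] at h0; norm_num at h0
        · exact absurd (hgap t ht hne) (not_le.mpr hlt)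
      have hsq : ε ^ 2 ≤ (t - t₀) ^ 2 := by
        nlinarith [sq_abs (t - t₀), abs_nonneg (t - t₀)]
      simp only [hhdef, hgdef, hψdef, hφdef, h0, smul_eq_mul]
      nlinarith
  have hsplit : cfc h A = Q * Q - R' * R' := by
    rw [hhdef]
    have h1 : cfc (fun t => g t * g t - (ε • ψ t) * (ε • ψ t)) A
        = cfc (fun t => g t * g t) A - cfc (fun t => (ε • ψ t) * (ε • ψ t)) A :=
      cfc_sub _ _ A ((hgc.mul hgc).continuousOn)
        ((show Continuous (fun t => ε • ψ t * ε • ψ t) from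
          (continuous_const.mul hψc).mul (continuous_const.mul hψc)).continuousOn)
    rw [h1, cfc_mul g g A hgc.continuousOn hgc.continuousOn,
      cfc_mul (fun t => ε • ψ t) (fun t => ε • ψ t) A
        (show Continuous (fun t => ε • ψ t) from continuous_const.mul hψc).continuousOn
        (show Continuous (fun t => ε • ψ t) from continuous_const.mul hψc).continuousOn,
        ← hQdef, ← hR'cfc]
  intro v
  -- positivity gives the bound
  have hposD : (Q * Q - R' * R').IsPositive := by
    rw [← ContinuousLinearMap.nonneg_iff_isPositive, ← hsplit]
    exact hpos
  have hip := hposD.inner_nonneg_left v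
  have hQQ : ⟪(Q * Q) v, v⟫_ℂ = ⟪Q v, Q v⟫_ℂ := by
    rw [ContinuousLinearMap.mul_apply]
    exact hQsymm (Q v) v
  have hRR : ⟪(R' * R') v, v⟫_ℂ = ⟪R' v, R' v⟫_ℂ := by
    rw [ContinuousLinearMap.mul_apply]
    exact hR'symm (R' v) v
  have hip2 : 0 ≤ ‖Q v‖ ^ 2 - ‖R' v‖ ^ 2 := by
    have h1 : ((Q * Q - R' * R') v) = (Q * Q) v - (R' * R') v := rfl
    rw [h1, inner_sub_left, hQQ, hRR] at hip
    rw [inner_self_eq_norm_sq_to_K, inner_self_eq_norm_sq_to_K] at hip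
    open scoped ComplexOrder in
    have hip' : (0:ℂ) ≤ ((‖Q v‖ ^ 2 - ‖R' v‖ ^ 2 : ℝ) : ℂ) := by push_cast; exact hip
    exact Complex.zero_le_real.mp hip'
  have hle : ‖R' v‖ ≤ ‖Q v‖ := by
    nlinarith [norm_nonneg (Q v), norm_nonneg (R' v)]
  have hR'v : ‖R' v‖ = ε * ‖v - P v‖ := by
    have h1 : R' v = ε • (v - P v) := by
      rw [hR'def, ContinuousLinearMap.smul_apply, ContinuousLinearMap.sub_apply,
        ContinuousLinearMap.one_apply]
    rw [h1, norm_smul, Real.norm_eq_abs, abs_of_pos hε]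
  have hQv : Q v = A v - (t₀ : ℂ) • v := by
    rw [hQ, ContinuousLinearMap.mul_apply, hφA]
    have h1 : (1 - P) v = v - P v := rfl
    rw [h1, map_sub, ContinuousLinearMap.sub_apply, ContinuousLinearMap.sub_apply,
      halg, halg, fact2 v]
    abel
  rw [← hR'v, ← hQv]
  exact hle

/-- `lp.single` is additive. -/
lemma aux_lp_single_add {H : Type*} [NormedAddCommGroup H] (i : ℕ) (a b : H) :
    lp.single (E := fun _ : ℕ => H) 2 i (a + b)
      = lp.single (E := fun _ : ℕ => H) 2 i a + lp.single (E := fun _ : ℕ => H) 2 i b := by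
  classical
  apply lp.ext
  funext j
  rcases eq_or_ne j i with rfl | hj
  · simp only [lp.coeFn_add, Pi.add_apply, lp.single_apply_self]
  · simp only [lp.coeFn_add, Pi.add_apply, lp.single_apply_ne _ _ _ hj, add_zero]

lemma aux_lp_single_sub {H : Type*} [NormedAddCommGroup H] (i : ℕ) (a b : H) :
    lp.single (E := fun _ : ℕ => H) 2 i (a - b)
      = lp.single (E := fun _ : ℕ => H) 2 i a - lp.single (E := fun _ : ℕ => H) 2 i b := by
  have h := aux_lp_single_add i (a - b) b
  rw [sub_add_cancel] at h
  rw [h]; abel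

end Aux

/-- The essential spectrum of a bounded operator: the spectrum with the
isolated eigenvalues of finite multiplicity removed. -/
noncomputable def essSpectrum {E : Type*} [NormedAddCommGroup E] [InnerProductSpace ℂ E]
    [CompleteSpace E] (A : E →L[ℂ] E) : Set ℂ :=
  {z | z ∈ spectrum ℂ A ∧
    ¬((∃ ε > 0, ∀ w ∈ spectrum ℂ A, w ≠ z → ε ≤ ‖w - z‖) ∧
      FiniteDimensional ℂ (Module.End.eigenspace (A : E →ₗ[ℂ] E) z))}

theorem infinitely_repeated_summand_spectrum_subset_ess
    {E : Type*} [NormedAddCommGroup E] [InnerProductSpace ℂ E] [CompleteSpace E]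
    {H₀ : Type*} [NormedAddCommGroup H₀] [InnerProductSpace ℂ H₀] [CompleteSpace H₀]
    (A : E →L[ℂ] E) (hA : IsSelfAdjoint A)
    (T : ℕ → H₀ →L[ℂ] H₀) (hT : ∀ n, IsSelfAdjoint (T n))
    (M : ℝ) (hM : ∀ n, ‖T n‖ ≤ M)
    (S : H₀ →L[ℂ] H₀) (hS : {n | T n = S}.Infinite)
    (K : lp (fun _ : ℕ => H₀) 2 →L[ℂ] lp (fun _ : ℕ => H₀) 2)
    (hK : ∀ (n : ℕ) (x : H₀), K (lp.single 2 n x) = lp.single 2 n (T n x))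
    (e : E ≃ₗᵢ[ℂ] lp (fun _ : ℕ => H₀) 2)
    (hcomm : ∀ x : E, e (A x) = K (e x)) :
    spectrum ℂ S ⊆ essSpectrum A := by
  classical
  intro z hz
  obtain ⟨n₀, hn₀⟩ := hS.nonempty
  have hSsa : IsSelfAdjoint S := hn₀ ▸ hT n₀
  -- the machine producing approximate eigenvectors of `A` supported in a given block
  have hmachine : ∀ n : ℕ, T n = S → ∀ δ : ℝ, 0 < δ →
      ∃ w : E, ‖w‖ = 1 ∧ ‖A w - z • w‖ ≤ δ ∧
        ∃ u : H₀, ‖u‖ = 1 ∧ e w = lp.single 2 n u := by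
    intro n hn δ hδ
    obtain ⟨u, hu1, hu2⟩ := aux_exists_approx S hSsa hz hδ
    refine ⟨e.symm (lp.single 2 n u), ?_, ?_, u, hu1, by simp⟩
    · rw [e.symm.norm_map]
      have := lp.norm_single (E := fun _ : ℕ => H₀) (p := 2) (by norm_num)
        n u
      rw [this, hu1]
    · have hAw : A (e.symm (lp.single 2 n u)) = e.symm (lp.single 2 n (S u)) := by
        apply e.injective
        rw [hcomm, e.apply_symm_apply, hK, hn, e.apply_symm_apply]
      rw [hAw]
      have hzw : z • e.symm (lp.single 2 n u) = e.symm (lp.single 2 n (z • u)) := by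
        rw [← e.symm.map_smul, lp.single_smul]
      rw [hzw, ← e.symm.map_sub, e.symm.norm_map, ← aux_lp_single_sub]
      have := lp.norm_single (E := fun _ : ℕ => H₀) (p := 2) (by norm_num)
        n (S u - z • u)
      rw [this]
      exact hu2
  -- Part 1 : z ∈ spectrum ℂ A
  have hspec : z ∈ spectrum ℂ A := by
    by_contra hcon
    rw [spectrum.notMem_iff] at hcon
    obtain ⟨C, hC⟩ := hcon.exists_right_inv
    set δ : ℝ := (2 * (1 + ‖C‖))⁻¹ with hδdef
    have hCnorm : (0:ℝ) < 1 + ‖C‖ := by positivity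
    have hδpos : 0 < δ := by positivity
    obtain ⟨w, hw1, hw2, -⟩ := hmachine n₀ hn₀ δ hδpos
    -- w = (algebraMap z - A) (C w)... use left inverse instead
    have hleft : C * (algebraMap ℂ (E →L[ℂ] E) z - A) = 1 := by
      -- in a ring, for units right inverse is left inverse
      obtain ⟨U, hU⟩ := hcon
      have hCU : C = ↑U⁻¹ := by
        have h1 : (U : E →L[ℂ] E) * C = 1 := by rw [hU]; exact hC
        calc C = (↑U⁻¹ * ↑U) * C := by rw [Units.inv_mul, one_mul]
        _ = ↑U⁻¹ * ((U : E →L[ℂ] E) * C) := by rw [mul_assoc]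
        _ = ↑U⁻¹ := by rw [h1, mul_one]
      rw [hCU, ← hU, Units.inv_mul]
    have hw3 : w = C ((algebraMap ℂ (E →L[ℂ] E) z - A) w) := by
      have := congrArg (fun (X : E →L[ℂ] E) => X w) hleft
      simpa [ContinuousLinearMap.mul_apply] using this.symm
    have h4 : (algebraMap ℂ (E →L[ℂ] E) z - A) w = z • w - A w := by
      rw [Algebra.algebraMap_eq_smul_one, ContinuousLinearMap.sub_apply,
        ContinuousLinearMap.smul_apply, ContinuousLinearMap.one_apply]
    have h5 : ‖z • w - A w‖ ≤ δ := by
      rw [← norm_neg]; simpa [neg_sub] using hw2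
    have h6 : (1:ℝ) ≤ ‖C‖ * δ := by
      calc (1:ℝ) = ‖w‖ := hw1.symm
      _ = ‖C ((algebraMap ℂ (E →L[ℂ] E) z - A) w)‖ := by rw [← hw3]
      _ ≤ ‖C‖ * ‖(algebraMap ℂ (E →L[ℂ] E) z - A) w‖ := C.le_opNorm _
      _ ≤ ‖C‖ * δ := by
          rw [h4]
          exact mul_le_mul_of_nonneg_left h5 (norm_nonneg C)
    have h7 : ‖C‖ * δ < 1 := by
      rw [hδdef]
      rw [mul_inv_lt_iff₀ (by positivity)]
      nlinarith [norm_nonneg C]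
    linarith
  -- Part 2 : not an isolated eigenvalue of finite multiplicity
  refine ⟨hspec, ?_⟩
  rintro ⟨⟨ε, hε, hgap⟩, hfd⟩
  set t₀ : ℝ := z.re with ht₀def
  have hzt₀ : z = (t₀ : ℂ) := hA.mem_spectrum_eq_re hspec
  -- gap in the real spectrum
  have hgapℝ : ∀ t ∈ spectrum ℝ A, t ≠ t₀ → ε ≤ |t - t₀| := by
    intro t ht htne
    have htC : (t : ℂ) ∈ spectrum ℂ A := by
      rw [← hA.spectrumRestricts.algebraMap_image]
      exact ⟨t, ht, rfl⟩
    have hne : (t : ℂ) ≠ z := by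
      rw [hzt₀]
      exact_mod_cast htne
    have := hgap (t : ℂ) htC hne
    rw [hzt₀] at this
    calc ε ≤ ‖(t : ℂ) - (t₀ : ℂ)‖ := this
    _ = |t - t₀| := by
        rw [← Complex.ofReal_sub, Complex.norm_real, Real.norm_eq_abs]
  obtain ⟨P, hP1, hP2⟩ := aux_gap_projection A hA t₀ ε hε hgapℝ
  set V := Module.End.eigenspace (A : E →ₗ[ℂ] E) z with hVdef
  have hrangeP : ∀ v : E, P v ∈ V := by
    intro v
    rw [hVdef, Module.End.mem_eigenspace_iff]
    have := hP1 v
    rw [hzt₀]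
    simpa using this
  set d : ℕ := Module.finrank ℂ V with hddef
  set N : ℕ := d + 1 with hNdef
  set δ : ℝ := ε / (2 * (N + 1)) with hδdef
  have hδpos : 0 < δ := by positivity
  -- pick N distinct blocks carrying a copy of S
  set m : Fin N → ℕ := fun i => (hS.natEmbedding _ (i : ℕ) : ℕ) with hmdef
  have hmS : ∀ i, T (m i) = S := fun i => (hS.natEmbedding _ (i : ℕ)).2
  have hminj : Function.Injective m := by
    intro i j hij
    have h1 : (hS.natEmbedding _ (i : ℕ)) = (hS.natEmbedding _ (j : ℕ)) :=
      Subtype.ext hij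
    have h2 := (hS.natEmbedding _).injective h1
    exact Fin.ext h2
  -- pick the vectors
  have hchoice : ∀ i : Fin N, ∃ w : E, ‖w‖ = 1 ∧ ‖A w - z • w‖ ≤ δ ∧
      ∃ u : H₀, ‖u‖ = 1 ∧ e w = lp.single 2 (m i) u :=
    fun i => hmachine (m i) (hmS i) δ hδpos
  choose w hw1 hw2 u hu1 hu2 using hchoice
  -- orthonormality
  have horth : Orthonormal ℂ w := by
    rw [orthonormal_iff_ite]
    intro i j
    have hinner : ⟪w i, w j⟫_ℂ = ⟪e (w i), e (w j)⟫_ℂ := (e.inner_map_map _ _).symm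
    rcases eq_or_ne i j with rfl | hij
    · simp [inner_self_eq_norm_sq_to_K, hw1 i]
    · rw [if_neg hij, hinner, hu2 i, hu2 j, lp.inner_single_left]
      rw [lp.single_apply_ne]
      · simp
      · exact fun hc => hij (hminj hc)
  -- the projected vectors are close to the w's
  have hclose : ∀ i, ‖w i - P (w i)‖ ≤ δ / ε := by
    intro i
    have h1 := hP2 (w i)
    have h2 : ‖A (w i) - (t₀ : ℂ) • w i‖ ≤ δ := by rw [← hzt₀]; exact hw2 i
    rw [le_div_iff₀ hε, mul_comm]
    linarith
  -- linear independence of the projections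
  haveI : FiniteDimensional ℂ V := hfd
  have hlin : LinearIndependent ℂ (fun i : Fin N => P (w i)) := by
    rw [Fintype.linearIndependent_iff]
    intro c hc
    by_contra hcon
    push_neg at hcon
    obtain ⟨i₁, hi₁⟩ := hcon
    -- take the index with maximal coefficient
    obtain ⟨i₀, -, hi₀⟩ := Finset.exists_max_image Finset.univ (fun i => ‖c i‖)
      ⟨i₁, Finset.mem_univ i₁⟩
    have hci₀pos : 0 < ‖c i₀‖ := by
      have h1 : ‖c i₁‖ ≤ ‖c i₀‖ := hi₀ i₁ (Finset.mem_univ i₁)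
      have h2 : 0 < ‖c i₁‖ := norm_pos_iff.mpr hi₁
      linarith
    set y : E := ∑ i, c i • w i with hydef
    have hy_eq : y = ∑ i, c i • (w i - P (w i)) := by
      rw [hydef]
      have : ∑ i, c i • (w i - P (w i)) = ∑ i, c i • w i - ∑ i, c i • P (w i) := by
        rw [← Finset.sum_sub_distrib]
        congr 1; funext i; rw [smul_sub]
      rw [this, hc, sub_zero]
    -- lower bound on ‖y‖
    have hlow : ‖c i₀‖ ≤ ‖y‖ := by
      have h1 : ⟪w i₀, y⟫_ℂ = c i₀ := horth.inner_right_fintype c i₀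
      calc ‖c i₀‖ = ‖⟪w i₀, y⟫_ℂ‖ := by rw [h1]
      _ ≤ ‖w i₀‖ * ‖y‖ := norm_inner_le_norm _ _
      _ = ‖y‖ := by rw [hw1 i₀, one_mul]
    -- upper bound on ‖y‖
    have hup : ‖y‖ ≤ (N : ℝ) * ‖c i₀‖ * (δ / ε) := by
      rw [hy_eq]
      calc ‖∑ i, c i • (w i - P (w i))‖ ≤ ∑ i, ‖c i • (w i - P (w i))‖ :=
            norm_sum_le _ _
      _ ≤ ∑ _i : Fin N, ‖c i₀‖ * (δ / ε) := by
          apply Finset.sum_le_sum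
          intro i _
          rw [norm_smul]
          have h1 : ‖c i‖ ≤ ‖c i₀‖ := hi₀ i (Finset.mem_univ i)
          have h2 := hclose i
          have h3 : (0:ℝ) ≤ δ / ε := by positivity
          exact mul_le_mul h1 h2 (norm_nonneg _) (le_of_lt hci₀pos)
      _ = (N : ℝ) * (‖c i₀‖ * (δ / ε)) := by
          rw [Finset.sum_const, Finset.card_univ, Fintype.card_fin, nsmul_eq_mul]
      _ = (N : ℝ) * ‖c i₀‖ * (δ / ε) := by ring
    have hNδ : (N : ℝ) * (δ / ε) < 1 := by
      have h2 : (0:ℝ) < 2 * ((N:ℝ) + 1) := by positivity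
      have hδε : δ / ε = (2 * ((N:ℝ) + 1))⁻¹ := by
        rw [hδdef]
        field_simp
      rw [hδε, ← div_eq_mul_inv, div_lt_one h2]
      have hN : (0:ℝ) ≤ (N:ℝ) := Nat.cast_nonneg N
      linarith
    have : ‖c i₀‖ < ‖c i₀‖ := by
      calc ‖c i₀‖ ≤ ‖y‖ := hlow
      _ ≤ (N : ℝ) * ‖c i₀‖ * (δ / ε) := hup
      _ = ((N : ℝ) * (δ / ε)) * ‖c i₀‖ := by ring
      _ < 1 * ‖c i₀‖ := by
          exact mul_lt_mul_of_pos_right hNδ hci₀pos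
      _ = ‖c i₀‖ := one_mul _
    exact absurd this (lt_irrefl _)
  -- contradiction with the dimension of V
  have hlinV : LinearIndependent ℂ (fun i : Fin N => (⟨P (w i), hrangeP (w i)⟩ : V)) := by
    apply LinearIndependent.of_comp V.subtype
    exact hlin
  have hcard := hlinV.fintype_card_le_finrank
  rw [Fintype.card_fin] at hcard
  omega
end
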